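/- arXiv:2204.00158 — 2 statements merged into one kernel-verified Lean document; each statement's English description precedes it below -/
import Mathlib

section
/- For every positive integer n, if the Aztec diamond of order n admits a tiling by straight tetrominos and skew tetrominos, then n is congruent to 0 or 3 modulo 4. -/
/-- Translate a set of cells by a vector `v`. -/
def cellTranslate (v : ℤ × ℤ) (s : Finset (ℤ × ℤ)) : Finset (ℤ × ℤ) :=
  s.image (fun p => (p.1 + v.1, p.2 + v.2))

/-- The Aztec diamond of order `n`: cells `(i,j)` with `|2i+1| + |2j+1| ≤ 2n`. -/
noncomputable def aztec (n : ℕ) : Finset (ℤ × ℤ) :=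
  (Finset.Icc (-(n : ℤ)) (n : ℤ) ×ˢ Finset.Icc (-(n : ℤ)) (n : ℤ)).filter
    (fun p => |2 * p.1 + 1| + |2 * p.2 + 1| ≤ 2 * (n : ℤ))

def IsHorizDomino (t : Finset (ℤ × ℤ)) : Prop :=
  ∃ v, t = cellTranslate v ({(0,0), (1,0)} : Finset (ℤ × ℤ))

def IsDomino (t : Finset (ℤ × ℤ)) : Prop :=
  ∃ v, t = cellTranslate v ({(0,0), (1,0)} : Finset (ℤ × ℤ)) ∨
       t = cellTranslate v ({(0,0), (0,1)} : Finset (ℤ × ℤ))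

def IsStraightTetromino (t : Finset (ℤ × ℤ)) : Prop :=
  ∃ v, t = cellTranslate v ({(0,0), (1,0), (2,0), (3,0)} : Finset (ℤ × ℤ)) ∨
       t = cellTranslate v ({(0,0), (0,1), (0,2), (0,3)} : Finset (ℤ × ℤ))

def IsHorizStraightTetromino (t : Finset (ℤ × ℤ)) : Prop :=
  ∃ v, t = cellTranslate v ({(0,0), (1,0), (2,0), (3,0)} : Finset (ℤ × ℤ))

def IsSkewTetromino (t : Finset (ℤ × ℤ)) : Prop :=
  ∃ v, t = cellTranslate v ({(0,0), (1,0), (1,1), (2,1)} : Finset (ℤ × ℤ)) ∨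
       t = cellTranslate v ({(0,1), (1,1), (1,0), (2,0)} : Finset (ℤ × ℤ)) ∨
       t = cellTranslate v ({(0,0), (0,1), (1,1), (1,2)} : Finset (ℤ × ℤ)) ∨
       t = cellTranslate v ({(1,0), (1,1), (0,1), (0,2)} : Finset (ℤ × ℤ))

def IsHorizSkewTetromino (t : Finset (ℤ × ℤ)) : Prop :=
  ∃ v, t = cellTranslate v ({(0,0), (1,0), (1,1), (2,1)} : Finset (ℤ × ℤ)) ∨
       t = cellTranslate v ({(0,1), (1,1), (1,0), (2,0)} : Finset (ℤ × ℤ))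

def IsSquareTetromino (t : Finset (ℤ × ℤ)) : Prop :=
  ∃ v, t = cellTranslate v ({(0,0), (1,0), (0,1), (1,1)} : Finset (ℤ × ℤ))

/-- `T` is a tiling of the finite region `R` where every tile satisfies `P`:
the tiles satisfy `P`, are pairwise disjoint, and their union is `R`. -/
def IsTiling (R : Finset (ℤ × ℤ)) (P : Finset (ℤ × ℤ) → Prop)
    (T : Finset (Finset (ℤ × ℤ))) : Prop :=
  (∀ t ∈ T, P t) ∧ (T : Set (Finset (ℤ × ℤ))).PairwiseDisjoint id ∧
    T.biUnion id = R

/-- The finset of all tilings of `R` by tiles satisfying `P`.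
(Every tiling of `R` consists of subsets of `R`, hence lies in `R.powerset.powerset`.) -/
noncomputable def tilings (R : Finset (ℤ × ℤ)) (P : Finset (ℤ × ℤ) → Prop) :
    Finset (Finset (Finset (ℤ × ℤ))) :=
  @Finset.filter _ (fun T => IsTiling R P T) (Classical.decPred _) R.powerset.powerset

/-! Give the cell `(i, j)` the weight `1 ∈ ZMod 2` when `i + j ≡ 0` or `3 (mod 4)`, and `0`
otherwise. The antidiagonal indices `i + j` of the four cells of a straight or skew tetromino are
either four consecutive integers or two integers taken twice, so every tile has weight `0` and so
has any tiled region. In the Aztec diamond the reflection `(i, j) ↦ (j, i)` preserves weights, so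
only the diagonal cells `(i, i)`, `-k ≤ i < k` with `k = ⌊(n + 1) / 2⌋`, count; pairing `(i, i)`
with `(-1-i, -1-i)` gives `k` pairs of weight `1`. Hence `k` is even, i.e. `n ≡ 0` or `3 (mod 4)`. -/

def antidiagonalWeight (x : ZMod 4) : ZMod 2 := if x = 0 ∨ x = 3 then 1 else 0

def cellWeight (p : ℤ × ℤ) : ZMod 2 := antidiagonalWeight ((p.1 + p.2 : ℤ) : ZMod 4)

theorem sum_cellTranslate {M : Type*} [AddCommMonoid M] (v : ℤ × ℤ) (s : Finset (ℤ × ℤ))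
    (g : ℤ × ℤ → M) : ∑ p ∈ cellTranslate v s, g p = ∑ p ∈ s, g (p + v) :=
  Finset.sum_image fun _ _ _ _ h => add_right_cancel h

theorem IsTiling.sum_eq_zero {M : Type*} [AddCommMonoid M] {R : Finset (ℤ × ℤ)}
    {P : Finset (ℤ × ℤ) → Prop} {T : Finset (Finset (ℤ × ℤ))} (hT : IsTiling R P T)
    {g : ℤ × ℤ → M} (hg : ∀ t, P t → ∑ p ∈ t, g p = 0) : ∑ p ∈ R, g p = 0 := by
  obtain ⟨hP, hdisj, rfl⟩ := hT
  rw [Finset.sum_biUnion hdisj]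
  exact Finset.sum_eq_zero fun t ht => hg t (hP t ht)

theorem cellWeight_add (p v : ℤ × ℤ) :
    cellWeight (p + v) =
      antidiagonalWeight (((p.1 + p.2 : ℤ) : ZMod 4) + ((v.1 + v.2 : ℤ) : ZMod 4)) := by
  rw [cellWeight, Prod.fst_add, Prod.snd_add, ← Int.cast_add]
  ring_nf

theorem sum_cellWeight_eq_zero {t : Finset (ℤ × ℤ)}
    (ht : IsStraightTetromino t ∨ IsSkewTetromino t) : ∑ p ∈ t, cellWeight p = 0 := by
  obtain ⟨v, rfl | rfl⟩ | ⟨v, rfl | rfl | rfl | rfl⟩ := ht <;>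
  · rw [sum_cellTranslate, Finset.sum_insert (by decide), Finset.sum_insert (by decide),
      Finset.sum_insert (by decide), Finset.sum_singleton]
    simp only [cellWeight_add]
    generalize ((v.1 + v.2 : ℤ) : ZMod 4) = x
    revert x
    decide

theorem Finset.sum_eq_sum_filter_fst_eq_snd {α M : Type*} [DecidableEq α] [AddCommMonoid M]
    {s : Finset (α × α)} (hs : ∀ p ∈ s, p.swap ∈ s) {g : α × α → M}
    (hg : ∀ p ∈ s, g p + g p.swap = 0) : ∑ p ∈ s, g p = ∑ p ∈ s with p.1 = p.2, g p := by
  suffices h : ∑ p ∈ s with ¬p.1 = p.2, g p = 0 by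
    rw [← Finset.sum_filter_add_sum_filter_not s fun p => p.1 = p.2, h, add_zero]
  refine Finset.sum_involution (fun p _ => p.swap) (fun p hp => hg p (Finset.mem_filter.1 hp).1)
    (fun p hp _ h => (Finset.mem_filter.1 hp).2 (congrArg Prod.fst h).symm)
    (fun p hp => ?_) (fun p _ => p.swap_swap)
  simp only [Finset.mem_filter] at hp ⊢
  exact ⟨hs p hp.1, Ne.symm hp.2⟩

theorem mem_aztec {n : ℕ} {p : ℤ × ℤ} :
    p ∈ aztec n ↔ |2 * p.1 + 1| + |2 * p.2 + 1| ≤ 2 * (n : ℤ) := by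
  simp only [aztec, Finset.mem_filter, Finset.mem_product, Finset.mem_Icc, and_iff_right_iff_imp]
  intro h
  have := le_abs_self (2 * p.1 + 1); have := neg_abs_le (2 * p.1 + 1)
  have := le_abs_self (2 * p.2 + 1); have := neg_abs_le (2 * p.2 + 1)
  omega

theorem swap_mem_aztec {n : ℕ} {p : ℤ × ℤ} (hp : p ∈ aztec n) : p.swap ∈ aztec n := by
  rw [mem_aztec, Prod.fst_swap, Prod.snd_swap, add_comm]
  exact mem_aztec.1 hp

theorem filter_fst_eq_snd_aztec (n : ℕ) :
    {p ∈ aztec n | p.1 = p.2} = (Finset.Ico (-((n + 1) / 2 : ℕ) : ℤ) ((n + 1) / 2 : ℕ)).image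
      fun i => (i, i) := by
  ext ⟨a, b⟩
  simp only [Finset.mem_filter, mem_aztec, Finset.mem_image, Finset.mem_Ico, Prod.mk.injEq]
  constructor
  · rintro ⟨h, rfl⟩
    have := le_abs_self (2 * a + 1); have := neg_abs_le (2 * a + 1)
    exact ⟨a, by omega, rfl, rfl⟩
  · rintro ⟨i, hi, rfl, rfl⟩
    refine ⟨?_, rfl⟩
    rcases abs_cases (2 * i + 1) with ⟨h, _⟩ | ⟨h, _⟩ <;> rw [h] <;> omega

theorem cellWeight_swap (p : ℤ × ℤ) : cellWeight p.swap = cellWeight p := by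
  rw [cellWeight, cellWeight, Prod.fst_swap, Prod.snd_swap, add_comm]

theorem sum_Ico_cellWeight_diag (k : ℕ) :
    ∑ i ∈ Finset.Ico (-k : ℤ) k, cellWeight (i, i) = k := by
  induction k with
  | zero => simp
  | succ k ih =>
    have hIco : Finset.Ico (-(k + 1 : ℕ) : ℤ) (k + 1 : ℕ) =
        insert (-(k + 1 : ℤ)) (insert (k : ℤ) (Finset.Ico (-k : ℤ) k)) := by
      ext i
      simp only [Finset.mem_Ico, Finset.mem_insert]
      omega
    have hpair :
        cellWeight (-(k + 1 : ℤ), -(k + 1 : ℤ)) + cellWeight ((k : ℤ), (k : ℤ)) = 1 := by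
      simp only [cellWeight]
      push_cast
      generalize (k : ZMod 4) = x
      revert x
      decide
    rw [hIco, Finset.sum_insert (by simp), Finset.sum_insert (by simp), ih, ← add_assoc, hpair]
    push_cast
    ring

theorem sum_cellWeight_aztec (n : ℕ) : ∑ p ∈ aztec n, cellWeight p = ((n + 1) / 2 : ℕ) := by
  rw [Finset.sum_eq_sum_filter_fst_eq_snd (fun _ => swap_mem_aztec)
      (fun p _ => by rw [cellWeight_swap]; exact CharTwo.add_self_eq_zero _),
    filter_fst_eq_snd_aztec, Finset.sum_image fun _ _ _ _ h => congrArg Prod.fst h]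
  exact sum_Ico_cellWeight_diag _

theorem aztec_straight_skew_mod_four_general (n : ℕ)
    (h : ∃ T : Finset (Finset (ℤ × ℤ)),
      IsTiling (aztec n) (fun t => IsStraightTetromino t ∨ IsSkewTetromino t) T) :
    n % 4 = 0 ∨ n % 4 = 3 := by
  obtain ⟨T, hT⟩ := h
  have h0 := hT.sum_eq_zero fun _ => sum_cellWeight_eq_zero
  rw [sum_cellWeight_aztec, ZMod.natCast_eq_zero_iff] at h0
  omega

/-- If the Aztec diamond of order `n` (with `n ≥ 1`) admits a tiling by straight
tetrominos and skew tetrominos, then `n ≡ 0` or `3 (mod 4)`. -/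
theorem aztec_straight_skew_mod_four (n : ℕ) (hn : 0 < n)
    (h : ∃ T : Finset (Finset (ℤ × ℤ)),
      IsTiling (aztec n) (fun t => IsStraightTetromino t ∨ IsSkewTetromino t) T) :
    n % 4 = 0 ∨ n % 4 = 3 :=
  aztec_straight_skew_mod_four_general n h
end

section
/- Let n be a nonnegative integer and let T be a tiling of the Aztec diamond of order n by horizontal skew tetrominos and square tetrominos. Splitting each tile of T into its two constituent horizontal dominos (the skew tetromino {(i,j),(i+1,j),(i+1,j+1),(i+2,j+1)} splits into {(i,j),(i+1,j)} and {(i+1,j+1),(i+2,j+1)}, and similarly for the other horizontal skew orientation; the square tetromino {(i,j),(i+1,j),(i,j+1),(i+1,j+1)} splits into {(i,j),(i+1,j)} and {(i,j+1),(i+1,j+1)}) yields the unique tiling of the Aztec diamond of order n by horizontal dominos. -/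
/-- Split a tile into its rows: the cells of the tile grouped by their
`y`-coordinate.  For a horizontal skew tetromino or a square tetromino this
splits the tile into its two constituent horizontal dominos. -/
def rowPieces (t : Finset (ℤ × ℤ)) : Finset (Finset (ℤ × ℤ)) :=
  (t.image Prod.snd).image (fun j => t.filter (fun p => p.2 = j))

/-!
Cutting every tile into its rows turns a tiling by horizontal skew and square tetrominos into a
tiling by horizontal dominos, since each such tetromino is two horizontal dominos stacked on top
of each other. A horizontal domino tiling of any finite region is unique: a cell of the region
with minimal `x`-coordinate has no neighbour on its left, so it must be the left cell of its
domino; removing that domino and inducting on the region determines the whole tiling.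
-/

namespace IsTiling

variable {R : Finset (ℤ × ℤ)} {P Q : Finset (ℤ × ℤ) → Prop} {T : Finset (Finset (ℤ × ℤ))}

lemma subset (hT : IsTiling R P T) {t : Finset (ℤ × ℤ)} (ht : t ∈ T) : t ⊆ R :=
  hT.2.2 ▸ Finset.subset_biUnion_of_mem id ht

lemma erase (hT : IsTiling R P T) {d : Finset (ℤ × ℤ)} (hd : d ∈ T) :
    IsTiling (R \ d) P (T.erase d) := by
  obtain ⟨hP, hdisj, hunion⟩ := hT
  refine ⟨fun t ht => hP t (Finset.mem_of_mem_erase ht),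
    hdisj.subset (Finset.coe_subset.2 (Finset.erase_subset d T)), ?_⟩
  rw [← hunion]
  ext p
  simp only [Finset.mem_biUnion, Finset.mem_sdiff, Finset.mem_erase, id]
  constructor
  · rintro ⟨t, ⟨htd, ht⟩, hpt⟩
    exact ⟨⟨t, ht, hpt⟩, Finset.disjoint_left.1 (hdisj ht hd htd) hpt⟩
  · rintro ⟨⟨t, ht, hpt⟩, hpd⟩
    exact ⟨t, ⟨fun htd => hpd (htd ▸ hpt), ht⟩, hpt⟩

lemma eq_empty_of_empty (hT : IsTiling ∅ P T) (hP : ∀ t, P t → t.Nonempty) : T = ∅ :=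
  Finset.eq_empty_of_forall_notMem fun t ht =>
    let ⟨p, hp⟩ := hP t (hT.1 t ht)
    Finset.notMem_empty p (hT.subset ht hp)

lemma biUnion (hT : IsTiling R P T) {f : Finset (ℤ × ℤ) → Finset (Finset (ℤ × ℤ))}
    (hf : ∀ t ∈ T, IsTiling t Q (f t)) : IsTiling R Q (T.biUnion f) := by
  obtain ⟨-, hdisj, hunion⟩ := hT
  refine ⟨?_, ?_, ?_⟩
  · intro d hd
    obtain ⟨t, ht, hdt⟩ := Finset.mem_biUnion.1 hd
    exact (hf t ht).1 d hdt
  · intro x hx y hy hxy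
    obtain ⟨t₁, ht₁, hx⟩ := Finset.mem_biUnion.1 (Finset.mem_coe.1 hx)
    obtain ⟨t₂, ht₂, hy⟩ := Finset.mem_biUnion.1 (Finset.mem_coe.1 hy)
    by_cases h : t₁ = t₂
    · subst h
      exact (hf t₁ ht₁).2.1 hx hy hxy
    · exact (hdisj ht₁ ht₂ h).mono ((hf t₁ ht₁).subset hx) ((hf t₂ ht₂).subset hy)
  · rw [Finset.biUnion_biUnion, ← hunion]
    exact Finset.biUnion_congr rfl fun t ht => (hf t ht).2.2

end IsTiling

lemma isHorizDomino_iff {t : Finset (ℤ × ℤ)} :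
    IsHorizDomino t ↔ ∃ a b : ℤ, t = {(a, b), (a + 1, b)} := by
  constructor
  · rintro ⟨⟨a, b⟩, rfl⟩
    exact ⟨a, b, by ext ⟨x, y⟩; simp [cellTranslate, Prod.ext_iff]; omega⟩
  · rintro ⟨a, b, rfl⟩
    exact ⟨(a, b), by ext ⟨x, y⟩; simp [cellTranslate, Prod.ext_iff]; omega⟩

namespace IsTiling

variable {R : Finset (ℤ × ℤ)} {D D₁ D₂ : Finset (Finset (ℤ × ℤ))}

lemma pair_mem_of_isHorizDomino (hD : IsTiling R IsHorizDomino D) {a j : ℤ}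
    (ha : (a, j) ∈ R) (ha' : (a - 1, j) ∉ R) :
    ({(a, j), (a + 1, j)} : Finset (ℤ × ℤ)) ∈ D := by
  obtain ⟨d, hd, had⟩ := Finset.mem_biUnion.1 (hD.2.2 ▸ ha : (a, j) ∈ D.biUnion id)
  obtain ⟨x, y, rfl⟩ := isHorizDomino_iff.1 (hD.1 d hd)
  simp only [id, Finset.mem_insert, Finset.mem_singleton, Prod.mk.injEq] at had
  rcases had with ⟨rfl, rfl⟩ | ⟨hx, rfl⟩
  · exact hd
  · exact absurd (hD.subset hd (by simp [show x = a - 1 by omega])) ha'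

lemma eq_of_isHorizDomino (h₁ : IsTiling R IsHorizDomino D₁)
    (h₂ : IsTiling R IsHorizDomino D₂) : D₁ = D₂ := by
  induction R using Finset.strongInduction generalizing D₁ D₂ with
  | H R ih =>
  obtain rfl | hR := R.eq_empty_or_nonempty
  · have hne : ∀ t, IsHorizDomino t → t.Nonempty := fun t ht => by
      obtain ⟨a, b, rfl⟩ := isHorizDomino_iff.1 ht
      exact Finset.insert_nonempty _ _
    rw [h₁.eq_empty_of_empty hne, h₂.eq_empty_of_empty hne]
  obtain ⟨⟨a, j⟩, ha, hmin⟩ := R.exists_min_image Prod.fst hR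
  have ha' : (a - 1, j) ∉ R := fun h => by have := hmin _ h; simp at this
  set d : Finset (ℤ × ℤ) := {(a, j), (a + 1, j)}
  have hd₁ : d ∈ D₁ := h₁.pair_mem_of_isHorizDomino ha ha'
  have hd₂ : d ∈ D₂ := h₂.pair_mem_of_isHorizDomino ha ha'
  have hlt : R \ d ⊂ R :=
    Finset.sdiff_ssubset (h₁.subset hd₁) (Finset.insert_nonempty _ _)
  calc D₁ = insert d (D₁.erase d) := (Finset.insert_erase hd₁).symm
    _ = insert d (D₂.erase d) := by rw [ih _ hlt (h₁.erase hd₁) (h₂.erase hd₂)]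
    _ = D₂ := Finset.insert_erase hd₂

end IsTiling

lemma isTiling_rowPieces {t : Finset (ℤ × ℤ)} {P : Finset (ℤ × ℤ) → Prop}
    (hP : ∀ d ∈ rowPieces t, P d) : IsTiling t P (rowPieces t) := by
  refine ⟨hP, ?_, ?_⟩
  · simp only [rowPieces, Finset.coe_image]
    rintro _ ⟨j₁, -, rfl⟩ _ ⟨j₂, -, rfl⟩ hne
    refine Finset.disjoint_filter.2 fun p _ h₁ h₂ => hne ?_
    rw [← h₁, ← h₂]
  · ext p
    simpa [rowPieces] using fun hp => ⟨p.1, hp⟩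

lemma rowPieces_stacked (a b c : ℤ) :
    rowPieces ({(a, b), (a + 1, b), (c, b + 1), (c + 1, b + 1)} : Finset (ℤ × ℤ)) =
      {{(a, b), (a + 1, b)}, {(c, b + 1), (c + 1, b + 1)}} := by
  have hrows : ({(a, b), (a + 1, b), (c, b + 1), (c + 1, b + 1)} : Finset (ℤ × ℤ)).image
      Prod.snd = {b, b + 1} := by
    ext y; simp
  rw [rowPieces, hrows, Finset.image_insert, Finset.image_singleton]
  congr 2 <;> ext ⟨x, y⟩ <;> simp [Prod.ext_iff] <;> omega

lemma exists_stacked_of_isHorizSkewTetromino_or_isSquareTetromino {t : Finset (ℤ × ℤ)}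
    (ht : IsHorizSkewTetromino t ∨ IsSquareTetromino t) :
    ∃ a b c : ℤ, t = {(a, b), (a + 1, b), (c, b + 1), (c + 1, b + 1)} := by
  rcases ht with ⟨⟨u, w⟩, rfl | rfl⟩ | ⟨⟨u, w⟩, rfl⟩
  · exact ⟨u, w, u + 1, by ext ⟨x, y⟩; simp [cellTranslate, Prod.ext_iff]; omega⟩
  · exact ⟨u + 1, w, u, by ext ⟨x, y⟩; simp [cellTranslate, Prod.ext_iff]; omega⟩
  · exact ⟨u, w, u, by ext ⟨x, y⟩; simp [cellTranslate, Prod.ext_iff]; omega⟩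

lemma isHorizDomino_of_mem_rowPieces {t d : Finset (ℤ × ℤ)}
    (ht : IsHorizSkewTetromino t ∨ IsSquareTetromino t) (hd : d ∈ rowPieces t) :
    IsHorizDomino d := by
  obtain ⟨a, b, c, rfl⟩ := exists_stacked_of_isHorizSkewTetromino_or_isSquareTetromino ht
  rw [rowPieces_stacked, Finset.mem_insert, Finset.mem_singleton] at hd
  rcases hd with rfl | rfl
  exacts [isHorizDomino_iff.2 ⟨a, b, rfl⟩, isHorizDomino_iff.2 ⟨c, b + 1, rfl⟩]

/-- Splitting each tile of a tiling of the Aztec diamond of order `n` by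
horizontal skew tetrominos and square tetrominos into its two constituent
horizontal dominos yields the unique tiling of the Aztec diamond of order `n`
by horizontal dominos. -/
theorem aztec_skew_square_split_eq_unique_horiz_domino_tiling (n : ℕ)
    (T : Finset (Finset (ℤ × ℤ)))
    (hT : IsTiling (aztec n) (fun t => IsHorizSkewTetromino t ∨ IsSquareTetromino t) T) :
    IsTiling (aztec n) IsHorizDomino (T.biUnion rowPieces) ∧
      ∀ D : Finset (Finset (ℤ × ℤ)),
        IsTiling (aztec n) IsHorizDomino D → D = T.biUnion rowPieces := by
  have hsplit : IsTiling (aztec n) IsHorizDomino (T.biUnion rowPieces) :=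
    hT.biUnion fun t ht =>
      isTiling_rowPieces fun _ hd => isHorizDomino_of_mem_rowPieces (hT.1 t ht) hd
  exact ⟨hsplit, fun D hD => hD.eq_of_isHorizDomino hsplit⟩
end
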